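/- (Infinite-expert Hedge, asymptotic regret) Let $(\mathcal{Y},\ell)$ be a metric space with diameter at most 1. Let $y_1,y_2,\dots\in\mathcal{Y}$ and for each $t$ let $\{z_{t,i}\}_{i\ge1}\subseteq\mathcal{Y}$. Partition time into blocks $T_j$ of length $j$ (with $T_1=\{1\}$, $T_{j+1}$ immediately following $T_j$), and within block $T_j$ run the Hedge forecaster over experts $\{1,\dots,j\}$ with learning rate $\eta_j=\sqrt{(8/j)\ln j}$, restarting weights uniformly at the start of each block, producing randomized predictions $\hat z_t$. Then with probability one there exists $\hat n\in\mathbb{N}$ such that for all $n>\hat n$: $\sum_{t=1}^n\ell(\hat z_t,y_t) \le \min_{1\le i\le n^{1/4}}\sum_{t=1}^n\ell(z_{t,i},y_t) + 19\,n^{3/4}\sqrt{\ln n} + \hat n$. -/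

import Mathlib

/-!
In block `T_j` the forecaster is Hedge over the experts `1, …, j`. The potential argument bounds
its expected loss over a block by that of any expert `i ≤ j` plus `η j + log j / η + log j`, which
is at most `5 √(j log j)` for `η = √(8 log j / j)`; blocks with `j < i` cost at most their length
`j < i`. Up to time `n` at most `J ≤ √(3n)` blocks are met, so the regret of the expected losses is
at most `J (5 √(J log J) + i) = O(n^{3/4} √(log n))`. The realized losses are independent,
`[0, 1]`-valued, and have these expected losses as means; by Hoeffding's inequality their centered
partial sums exceed `√(n log n)` with probability at most `n⁻²`, so by Borel–Cantelli this happens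
only finitely often almost surely.
-/

open Finset Real MeasureTheory ProbabilityTheory Filter

lemma exp_neg_mul_le_one_sub_mul {η x : ℝ} (hx0 : 0 ≤ x) (hx1 : x ≤ 1) :
    exp (-η * x) ≤ 1 - (1 - exp (-η)) * x := by
  have h := convexOn_exp.2 (Set.mem_univ (-η)) (Set.mem_univ 0) hx0 (sub_nonneg.2 hx1)
    (by ring)
  simp only [smul_eq_mul, mul_zero, add_zero, exp_zero, mul_comm x] at h
  linarith

lemma div_one_add_le_one_sub_exp_neg {η : ℝ} (hη : 0 ≤ η) : η / (1 + η) ≤ 1 - exp (-η) := by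
  have h : exp (-η) * (1 + η) ≤ 1 := by
    calc exp (-η) * (1 + η) ≤ exp (-η) * exp η := by
          gcongr; linarith [add_one_le_exp η]
      _ = 1 := by rw [← exp_add, neg_add_cancel, exp_zero]
  rw [div_le_iff₀ (by linarith)]
  linarith

lemma regret_terms_le {n J i : ℝ} (hn : 4 ≤ n) (hJ : 1 ≤ J) (hJn : J ≤ n) (hJ2 : J * J ≤ 3 * n)
    (hi0 : 0 ≤ i) (hi : i ≤ n ^ (1 / 4 : ℝ)) :
    J * (5 * √(J * log J) + i) + √(n * log n) ≤ 19 * n ^ (3 / 4 : ℝ) * √(log n) := by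
  have hn0 : 0 < n := by linarith
  set q := n ^ (1 / 4 : ℝ)
  set s := √(log n)
  have hq0 : 0 < q := rpow_pos_of_pos hn0 _
  have hq4 : q ^ 4 = n := by rw [← rpow_natCast, ← rpow_mul hn0.le]; norm_num
  have hq3 : n ^ (3 / 4 : ℝ) = q ^ 3 := by rw [← rpow_natCast, ← rpow_mul hn0.le]; norm_num
  have hq1 : 1 ≤ q := by
    by_contra! h
    nlinarith [pow_lt_one₀ hq0.le h four_ne_zero]
  have hlog : 1 ≤ log n := by
    rw [le_log_iff_exp_le hn0]
    linarith [exp_one_lt_d9]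
  have hs1 : 1 ≤ s := one_le_sqrt.2 hlog
  have hs2 : s ^ 2 = log n := sq_sqrt (by linarith)
  have hJq : J ≤ 2 * q ^ 2 :=
    (pow_le_pow_iff_left₀ (by linarith) (by positivity) two_ne_zero).1 (by nlinarith)
  have hlogJ : log J ≤ s ^ 2 := hs2 ▸ log_le_log (by linarith) hJn
  have hsqrtJ : √(J * log J) ≤ 3 / 2 * q * s := by
    refine sqrt_le_iff.2 ⟨by positivity, ?_⟩
    have := mul_le_mul hJq hlogJ (log_nonneg hJ) (by positivity)
    nlinarith
  have hsqrtn : √(n * log n) ≤ q ^ 3 * s := by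
    refine sqrt_le_iff.2 ⟨by positivity, ?_⟩
    rw [← hs2, ← hq4]
    have : q ^ 4 ≤ q ^ 6 := pow_le_pow_right₀ hq1 (by norm_num)
    nlinarith [sq_nonneg s]
  rw [hq3]
  calc J * (5 * √(J * log J) + i) + √(n * log n)
      ≤ 2 * q ^ 2 * (5 * (3 / 2 * q * s) + q) + q ^ 3 * s := by gcongr
    _ ≤ 19 * q ^ 3 * s := by nlinarith [pow_pos hq0 3]

namespace Hedge

variable (η : ℝ) (ℓ : ℕ → ℕ → ℝ) (j a : ℕ)

/-- Weight of expert `i` at time `t` in a run of Hedge restarted at time `a`, where `ℓ s i` is the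
loss of expert `i` at time `s`; `potential` and `loss` use the experts `1, …, j`. -/
noncomputable def weight (t i : ℕ) : ℝ := exp (-η * ∑ s ∈ Ico a t, ℓ s i)

noncomputable def potential (t : ℕ) : ℝ := ∑ i ∈ Icc 1 j, weight η ℓ a t i

/-- Expected loss at time `t` of the forecaster that follows expert `i` with probability
proportional to its weight. -/
noncomputable def loss (t : ℕ) : ℝ :=
  (∑ i ∈ Icc 1 j, weight η ℓ a t i * ℓ t i) / potential η ℓ j a t

variable {η ℓ j a}

lemma weight_pos (t i : ℕ) : 0 < weight η ℓ a t i := exp_pos _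

lemma potential_pos (hj : 1 ≤ j) (t : ℕ) : 0 < potential η ℓ j a t :=
  sum_pos (fun i _ => weight_pos t i) ⟨1, mem_Icc.2 ⟨le_rfl, hj⟩⟩

lemma potential_self : potential η ℓ j a a = j := by
  simp [potential, weight]

lemma loss_one (t : ℕ) : loss η ℓ 1 a t = ℓ t 1 := by
  simp [loss, potential, (weight_pos t 1).ne']

lemma potential_mul_loss (hj : 1 ≤ j) (t : ℕ) :
    potential η ℓ j a t * loss η ℓ j a t = ∑ i ∈ Icc 1 j, weight η ℓ a t i * ℓ t i :=
  mul_div_cancel₀ _ (potential_pos hj t).ne'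

lemma loss_le_one (hℓ1 : ∀ t i, ℓ t i ≤ 1) (hj : 1 ≤ j) (t : ℕ) : loss η ℓ j a t ≤ 1 := by
  refine div_le_one_of_le₀ (sum_le_sum fun i _ => ?_) (potential_pos hj t).le
  exact mul_le_of_le_one_right (weight_pos t i).le (hℓ1 t i)

lemma potential_succ_le (hℓ : ∀ t i, ℓ t i ∈ Set.Icc 0 1) (hj : 1 ≤ j) {t : ℕ} (ht : a ≤ t) :
    potential η ℓ j a (t + 1)
      ≤ potential η ℓ j a t * exp (-(1 - exp (-η)) * loss η ℓ j a t) := by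
  set c := 1 - exp (-η)
  calc potential η ℓ j a (t + 1)
      = ∑ i ∈ Icc 1 j, weight η ℓ a t i * exp (-η * ℓ t i) := by
        simp only [potential, weight, sum_Ico_succ_top ht, mul_add, exp_add]
    _ ≤ ∑ i ∈ Icc 1 j, weight η ℓ a t i * (1 - c * ℓ t i) :=
        sum_le_sum fun i _ => mul_le_mul_of_nonneg_left
          (exp_neg_mul_le_one_sub_mul (hℓ t i).1 (hℓ t i).2) (weight_pos t i).le
    _ = potential η ℓ j a t * (1 - c * loss η ℓ j a t) := by
        rw [mul_sub, mul_one, mul_left_comm, potential_mul_loss hj, mul_sum, potential,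
          ← sum_sub_distrib]
        exact sum_congr rfl fun i _ => by ring
    _ ≤ potential η ℓ j a t * exp (-c * loss η ℓ j a t) := by
        gcongr
        · exact (potential_pos hj t).le
        · linarith [add_one_le_exp (-c * loss η ℓ j a t)]

lemma potential_le (hℓ : ∀ t i, ℓ t i ∈ Set.Icc 0 1) (hj : 1 ≤ j) {b : ℕ} (hab : a ≤ b) :
    potential η ℓ j a b ≤ j * exp (-(1 - exp (-η)) * ∑ t ∈ Ico a b, loss η ℓ j a t) := by
  induction b, hab using Nat.le_induction with
  | base => simp [potential_self]
  | succ b hab ih =>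
    calc potential η ℓ j a (b + 1)
        ≤ potential η ℓ j a b * exp (-(1 - exp (-η)) * loss η ℓ j a b) :=
          potential_succ_le hℓ hj hab
      _ ≤ j * exp (-(1 - exp (-η)) * ∑ t ∈ Ico a b, loss η ℓ j a t)
            * exp (-(1 - exp (-η)) * loss η ℓ j a b) := by gcongr
      _ = _ := by rw [sum_Ico_succ_top hab, mul_assoc, ← exp_add]; ring_nf

lemma loss_nonneg (hℓ0 : ∀ t i, 0 ≤ ℓ t i) (hj : 1 ≤ j) (t : ℕ) : 0 ≤ loss η ℓ j a t :=
  div_nonneg (sum_nonneg fun i _ => mul_nonneg (weight_pos t i).le (hℓ0 t i))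
    (potential_pos hj t).le

theorem mul_sum_loss_le (hℓ : ∀ t i, ℓ t i ∈ Set.Icc 0 1) (hj : 1 ≤ j)
    {b i : ℕ} (hab : a ≤ b) (hi : i ∈ Icc 1 j) :
    (1 - exp (-η)) * ∑ t ∈ Ico a b, loss η ℓ j a t ≤ η * ∑ t ∈ Ico a b, ℓ t i + log j := by
  have hw : exp (-η * ∑ t ∈ Ico a b, ℓ t i)
      ≤ j * exp (-(1 - exp (-η)) * ∑ t ∈ Ico a b, loss η ℓ j a t) :=
    (single_le_sum (fun k _ => (weight_pos b k).le) hi).trans (potential_le hℓ hj hab)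
  have hlog := log_le_log (exp_pos _) hw
  rw [log_exp, log_mul (by positivity) (exp_pos _).ne', log_exp] at hlog
  linarith

theorem sum_loss_le (hℓ : ∀ t i, ℓ t i ∈ Set.Icc 0 1) (hj : 1 ≤ j) (hη : 0 < η)
    {b i : ℕ} (hab : a ≤ b) (hi : i ∈ Icc 1 j) :
    ∑ t ∈ Ico a b, loss η ℓ j a t
      ≤ (1 + η) * ∑ t ∈ Ico a b, ℓ t i + log j / η + log j := by
  have hQ := mul_sum_loss_le (η := η) hℓ hj hab hi
  have hQ0 : 0 ≤ ∑ t ∈ Ico a b, loss η ℓ j a t :=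
    sum_nonneg fun t _ => loss_nonneg (fun t i => (hℓ t i).1) hj t
  have hc : η / (1 + η) * ∑ t ∈ Ico a b, loss η ℓ j a t ≤ η * ∑ t ∈ Ico a b, ℓ t i + log j :=
    (mul_le_mul_of_nonneg_right (div_one_add_le_one_sub_exp_neg hη.le) hQ0).trans hQ
  rw [div_mul_eq_mul_div, div_le_iff₀ (by linarith)] at hc
  refine le_of_mul_le_mul_left (hc.trans_eq ?_) hη
  field_simp
  ring

lemma tuned_overhead_le {x : ℝ} (hx : 1 < x) :
    √(8 / x * log x) * x + log x / √(8 / x * log x) + log x ≤ 5 * √(x * log x) := by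
  have hx0 : 0 < x := by linarith
  have hL : 0 < log x := log_pos hx
  set η := √(8 / x * log x)
  set S := √(x * log x)
  have hη : 0 < η := sqrt_pos.2 (by positivity)
  have hη2 : η ^ 2 = 8 / x * log x := sq_sqrt (by positivity)
  have hS : 0 ≤ S := sqrt_nonneg _
  have hS2 : S ^ 2 = x * log x := sq_sqrt (by positivity)
  have h1 : η * x ≤ 3 * S := by
    refine (pow_le_pow_iff_left₀ (by positivity) (by positivity) two_ne_zero).1 ?_
    rw [mul_pow, hη2, mul_pow, hS2]
    field_simp
    nlinarith
  have h2 : log x / η ≤ S := by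
    refine (pow_le_pow_iff_left₀ (by positivity) hS two_ne_zero).1 ?_
    rw [div_pow, hη2, hS2]
    field_simp
    nlinarith
  have h3 : log x ≤ S := by
    refine (pow_le_pow_iff_left₀ hL.le hS two_ne_zero).1 ?_
    rw [hS2, sq]
    exact mul_le_mul_of_nonneg_right ((log_le_sub_one_of_pos hx0).trans (by linarith)) hL.le
  linarith

theorem block_regret_le (hℓ : ∀ t i, ℓ t i ∈ Set.Icc 0 1) (hj : 1 ≤ j)
    {b i : ℕ} (hab : a ≤ b) (hb : b ≤ a + j) (hi : 1 ≤ i) :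
    ∑ t ∈ Ico a b, (loss √(8 / j * log j) ℓ j a t - ℓ t i) ≤ 5 * √(j * log j) + i := by
  have hS : 0 ≤ 5 * √((j : ℝ) * log j) := by positivity
  have hlen : ∑ t ∈ Ico a b, (1 : ℝ) ≤ j := by
    rw [sum_const, Nat.card_Ico, nsmul_one]
    exact_mod_cast (by omega : b - a ≤ j)
  rcases lt_or_ge j i with hji | hij
  · calc _ ≤ ∑ t ∈ Ico a b, (1 : ℝ) := sum_le_sum fun t _ => by
          linarith [loss_le_one (η := √(8 / j * log j)) (a := a) (fun t i => (hℓ t i).2) hj t,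
            (hℓ t i).1]
      _ ≤ i := hlen.trans (by exact_mod_cast hji.le)
      _ ≤ _ := by linarith
  rcases hj.eq_or_lt with rfl | hj2
  · obtain rfl : i = 1 := by omega
    simp [loss_one]
  have hj2' : (1 : ℝ) < j := by exact_mod_cast hj2
  have hη : 0 < √(8 / j * log j) := sqrt_pos.2 (by have := log_pos hj2'; positivity)
  have hL : ∑ t ∈ Ico a b, ℓ t i ≤ j := (sum_le_sum fun t _ => (hℓ t i).2).trans hlen
  have hHedge := sum_loss_le hℓ hj hη hab (mem_Icc.2 ⟨hi, hij⟩)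
  have hrate := tuned_overhead_le hj2'
  rw [sum_sub_distrib]
  nlinarith [mul_le_mul_of_nonneg_left hL hη.le]

lemma div_sum_eq_weight_div_potential {η : ℝ} {ℓ : ℕ → ℕ → ℝ} {J a t : ℕ} (hJ : 1 ≤ J)
    (ht : 1 ≤ t) {w : ℕ → ℝ}
    (hw : ∀ i, w i = 1 / (J : ℝ) * exp (-η * ∑ s ∈ Icc a (t - 1), ℓ s i)) (i : ℕ) :
    w i / ∑ k ∈ Icc 1 J, w k = weight η ℓ a t i / potential η ℓ J a t := by
  have hIcc : Icc a (t - 1) = Ico a t := by ext; simp only [mem_Icc, mem_Ico]; omega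
  simp only [hw, hIcc, ← mul_sum]
  exact mul_div_mul_left _ _ (by positivity)

end Hedge

section Schedule

-- `tseq j` is the first time of block `T_j` and `jb t` the index of the block containing `t`.
variable {tseq : ℕ → ℕ} (ht1 : tseq 1 = 1) (htsucc : ∀ j ≥ 1, tseq (j + 1) = tseq j + j)
include htsucc

lemma tseq_mono {j k : ℕ} (hj : 1 ≤ j) (hjk : j ≤ k) : tseq j ≤ tseq k := by
  induction k, hjk using Nat.le_induction with
  | base => rfl
  | succ k hjk ih => rw [htsucc k (hj.trans hjk)]; omega

include ht1

lemma le_tseq {j : ℕ} (hj : 1 ≤ j) : j ≤ tseq j := by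
  induction j, hj using Nat.le_induction with
  | base => rw [ht1]
  | succ j hj ih => rw [htsucc j hj]; omega

lemma mul_self_le_two_mul_tseq_add {j : ℕ} (hj : 1 ≤ j) : j * j ≤ 2 * tseq j + j := by
  induction j, hj using Nat.le_induction with
  | base => simp [ht1]
  | succ j hj ih => rw [htsucc j hj]; nlinarith

variable {jb : ℕ → ℕ} (hjb : ∀ t ≥ 1, 1 ≤ jb t ∧ tseq (jb t) ≤ t ∧ t < tseq (jb t + 1))
include hjb

omit ht1 in
lemma jb_le_jb {t n : ℕ} (ht : 1 ≤ t) (htn : t ≤ n) : jb t ≤ jb n := by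
  by_contra! h
  have := tseq_mono htsucc (Nat.le_add_left 1 (jb n)) h
  have := hjb t ht
  have := hjb n (ht.trans htn)
  omega

lemma filter_jb_eq {n j : ℕ} (hj : 1 ≤ j) :
    (Icc 1 n).filter (jb · = j) = Ico (tseq j) (min (n + 1) (tseq (j + 1))) := by
  ext t
  simp only [mem_filter, mem_Icc, mem_Ico, lt_min_iff]
  constructor
  · rintro ⟨⟨ht, htn⟩, rfl⟩
    have := hjb t ht
    omega
  · rintro ⟨hjt, htn, htj⟩
    have ht : 1 ≤ t := hj.trans ((le_tseq ht1 htsucc hj).trans hjt)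
    obtain ⟨hbt, hlo, hhi⟩ := hjb t ht
    refine ⟨⟨ht, by omega⟩, le_antisymm ?_ ?_⟩
    · by_contra! h
      have := tseq_mono htsucc (Nat.le_add_left 1 j) h
      omega
    · by_contra! h
      have := tseq_mono htsucc (Nat.le_add_left 1 (jb t)) h
      omega

lemma jb_le {n : ℕ} (hn : 1 ≤ n) : jb n ≤ n :=
  (le_tseq ht1 htsucc (hjb n hn).1).trans (hjb n hn).2.1

lemma jb_mul_self_le {n : ℕ} (hn : 1 ≤ n) : jb n * jb n ≤ 3 * n := by
  have := mul_self_le_two_mul_tseq_add ht1 htsucc (hjb n hn).1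
  have := jb_le ht1 htsucc hjb hn
  have := (hjb n hn).2.1
  omega

theorem restarted_regret_le {η : ℕ → ℝ} (hη : ∀ j ≥ 1, η j = √(8 / j * log j))
    {ℓ : ℕ → ℕ → ℝ} (hℓ : ∀ t i, ℓ t i ∈ Set.Icc 0 1) {n i : ℕ} (hn : 1 ≤ n) (hi : 1 ≤ i) :
    ∑ t ∈ Icc 1 n, (Hedge.loss (η (jb t)) ℓ (jb t) (tseq (jb t)) t - ℓ t i)
      ≤ jb n * (5 * √(jb n * log (jb n)) + i) := by
  have hmaps : ∀ t ∈ Icc 1 n, jb t ∈ Icc 1 (jb n) := fun t ht =>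
    mem_Icc.2 ⟨(hjb t (mem_Icc.1 ht).1).1, jb_le_jb htsucc hjb (mem_Icc.1 ht).1 (mem_Icc.1 ht).2⟩
  have hblock : ∀ j ∈ Icc 1 (jb n),
      ∑ t ∈ (Icc 1 n).filter (jb · = j), (Hedge.loss (η (jb t)) ℓ (jb t) (tseq (jb t)) t - ℓ t i)
        ≤ 5 * √(jb n * log (jb n)) + i := by
    intro j hj
    obtain ⟨hj1, hjn⟩ := mem_Icc.1 hj
    rw [sum_congr rfl fun t ht => by rw [(mem_filter.1 ht).2], filter_jb_eq ht1 htsucc hjb hj1,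
      hη j hj1]
    have hjt : tseq j ≤ n := (tseq_mono htsucc hj1 hjn).trans (hjb n hn).2.1
    have hlen := htsucc j hj1
    refine (Hedge.block_regret_le hℓ hj1 (by omega) (by omega) hi).trans ?_
    have hj1' : (1 : ℝ) ≤ j := by exact_mod_cast hj1
    have hjn' : (j : ℝ) ≤ jb n := by exact_mod_cast hjn
    have := log_nonneg hj1'
    gcongr
  rw [← sum_fiberwise_of_maps_to hmaps]
  calc _ ≤ ∑ j ∈ Icc 1 (jb n), (5 * √(jb n * log (jb n)) + i) := sum_le_sum hblock
    _ = _ := by rw [sum_const, Nat.card_Icc, nsmul_eq_mul, Nat.add_sub_cancel]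

theorem restarted_regret_add_sqrt_le {η : ℕ → ℝ} (hη : ∀ j ≥ 1, η j = √(8 / j * log j))
    {ℓ : ℕ → ℕ → ℝ} (hℓ : ∀ t i, ℓ t i ∈ Set.Icc 0 1) {n i : ℕ} (hn : 4 ≤ n) (hi : 1 ≤ i)
    (hin : (i : ℝ) ≤ (n : ℝ) ^ (1 / 4 : ℝ)) :
    ∑ t ∈ Icc 1 n, (Hedge.loss (η (jb t)) ℓ (jb t) (tseq (jb t)) t - ℓ t i) + √(n * log n)
      ≤ 19 * (n : ℝ) ^ (3 / 4 : ℝ) * √(log n) := by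
  have hn1 : 1 ≤ n := by omega
  refine (add_le_add (restarted_regret_le ht1 htsucc hjb hη hℓ hn1 hi) le_rfl).trans ?_
  exact regret_terms_le (by exact_mod_cast hn) (by exact_mod_cast (hjb n hn1).1)
    (by exact_mod_cast jb_le ht1 htsucc hjb hn1)
    (by exact_mod_cast jb_mul_self_le ht1 htsucc hjb hn1) i.cast_nonneg hin

end Schedule

lemma integral_comp_eq_sum_of_map_eq {Ω α ι : Type*} [MeasurableSpace Ω] [MeasurableSpace α]
    {μ : Measure Ω} {X : Ω → α} {f : α → ℝ} (hX : Measurable X) (hf : Measurable f)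
    {s : Finset ι} {p : ι → ℝ} {x : ι → α} (hp : ∀ i ∈ s, 0 ≤ p i)
    (hmap : μ.map X = ∑ i ∈ s, ENNReal.ofReal (p i) • Measure.dirac (x i)) :
    ∫ ω, f (X ω) ∂μ = ∑ i ∈ s, p i * f (x i) := by
  rw [← integral_map hX.aemeasurable hf.aestronglyMeasurable, hmap,
    integral_finsetSum_measure fun i _ =>
      (integrable_dirac' hf.stronglyMeasurable enorm_lt_top).smul_measure ENNReal.ofReal_ne_top]
  refine sum_congr rfl fun i hi => ?_
  rw [integral_smul_measure, integral_dirac' f _ hf.stronglyMeasurable,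
    ENNReal.toReal_ofReal (hp i hi), smul_eq_mul]

lemma Hedge.integral_comp_eq_loss {Ω α : Type*} [MeasurableSpace Ω] [MeasurableSpace α]
    {μ : Measure Ω} {X : Ω → α} {f : α → ℝ} (hX : Measurable X) (hf : Measurable f)
    {η : ℝ} {ℓ : ℕ → ℕ → ℝ} {j a t : ℕ} (hj : 1 ≤ j) {x : ℕ → α} (hx : ∀ i, f (x i) = ℓ t i)
    (hmap : μ.map X = ∑ i ∈ Icc 1 j,
      ENNReal.ofReal (weight η ℓ a t i / potential η ℓ j a t) • Measure.dirac (x i)) :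
    ∫ ω, f (X ω) ∂μ = loss η ℓ j a t := by
  rw [integral_comp_eq_sum_of_map_eq hX hf
    (fun i _ => div_nonneg (weight_pos t i).le (potential_pos hj t).le) hmap, loss, sum_div]
  exact sum_congr rfl fun i _ => by rw [hx, div_mul_eq_mul_div]

lemma measureReal_sum_sub_integral_ge_le {Ω : Type*} [MeasurableSpace Ω] {μ : Measure Ω}
    [IsProbabilityMeasure μ] {X : ℕ → Ω → ℝ} (hX : ∀ t, AEMeasurable (X t) μ)
    (hindep : iIndepFun X μ) (hX01 : ∀ t, ∀ᵐ ω ∂μ, X t ω ∈ Set.Icc 0 1) {n : ℕ} (hn : 1 ≤ n) :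
    μ.real {ω | √(n * log n) ≤ ∑ t ∈ Icc 1 n, (X t ω - μ[X t])} ≤ (n : ℝ) ^ (-2 : ℝ) := by
  have hc := hindep.comp (fun t u => u - μ[X t]) fun t => measurable_id.sub_const _
  have h := HasSubgaussianMGF.measure_sum_ge_le_of_iIndepFun hc (s := Icc 1 n)
    (fun t _ => hasSubgaussianMGF_of_mem_Icc (hX t) (hX01 t)) (sqrt_nonneg (n * log n))
  refine h.trans_eq ?_
  have hn' : (0 : ℝ) < n := by exact_mod_cast hn
  rw [sq_sqrt (by positivity), rpow_def_of_pos hn']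
  congr 1
  simp only [sub_zero, nnnorm_one, one_div, inv_pow, sum_const, Nat.card_Icc,
    add_tsub_cancel_right, nsmul_eq_mul, NNReal.coe_mul, NNReal.coe_natCast, NNReal.coe_inv,
    NNReal.coe_pow, NNReal.coe_ofNat, mul_neg]
  field_simp

theorem ae_eventually_sum_sub_integral_lt {Ω : Type*} [MeasurableSpace Ω] {μ : Measure Ω}
    [IsProbabilityMeasure μ] {X : ℕ → Ω → ℝ} (hX : ∀ t, AEMeasurable (X t) μ)
    (hindep : iIndepFun X μ) (hX01 : ∀ t, ∀ᵐ ω ∂μ, X t ω ∈ Set.Icc 0 1) :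
    ∀ᵐ ω ∂μ, ∀ᶠ n in atTop, ∑ t ∈ Icc 1 n, (X t ω - μ[X t]) < √(n * log n) := by
  set A : ℕ → Set Ω := fun n => {ω | √(n * log n) ≤ ∑ t ∈ Icc 1 n, (X t ω - μ[X t])}
  have hsum : Summable fun n => μ.real (A n) :=
    .of_norm_bounded_eventually_nat (summable_nat_rpow.2 (by norm_num : (-2 : ℝ) < -1))
      (eventually_atTop.2 ⟨1, fun n hn => by
        rw [norm_of_nonneg measureReal_nonneg]
        exact measureReal_sum_sub_integral_ge_le hX hindep hX01 hn⟩)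
  have hA : ∑' n, μ (A n) ≠ ⊤ := by
    have := (ENNReal.tsum_coe_ne_top_iff_summable_coe (f := fun n => (μ (A n)).toNNReal)).2 hsum
    simpa [ENNReal.coe_toNNReal (measure_ne_top μ _)] using this
  filter_upwards [ae_eventually_notMem hA] with ω hω
  filter_upwards [hω] with n hn
  simpa [A] using hn

theorem stmt_13 {Ω : Type*} [MeasurableSpace Ω] (μ : Measure Ω) [IsProbabilityMeasure μ]
    {𝒴 : Type*} [MetricSpace 𝒴] [m𝒴 : MeasurableSpace 𝒴] [BorelSpace 𝒴]
    (hbd : ∀ a b : 𝒴, dist a b ≤ 1)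
    (y : ℕ → 𝒴) (z : ℕ → ℕ → 𝒴)
    (tseq : ℕ → ℕ) (ht1 : tseq 1 = 1) (htsucc : ∀ j ≥ 1, tseq (j + 1) = tseq j + j)
    (jb : ℕ → ℕ) (hjb : ∀ t ≥ 1, 1 ≤ jb t ∧ tseq (jb t) ≤ t ∧ t < tseq (jb t + 1))
    (η : ℕ → ℝ) (hη : ∀ j ≥ 1, η j = Real.sqrt ((8 / (j : ℝ)) * Real.log j))
    (w : ℕ → ℕ → ℝ)
    (hw : ∀ t ≥ 1, ∀ i, w t i = (1 / (jb t : ℝ)) *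
        Real.exp (-(η (jb t)) * ∑ s ∈ Finset.Icc (tseq (jb t)) (t - 1), dist (z s i) (y s)))
    (v : ℕ → ℕ → ℝ)
    (hv : ∀ t ≥ 1, ∀ i, v t i = w t i / ∑ i' ∈ Finset.Icc 1 (jb t), w t i')
    (zh : ℕ → Ω → 𝒴) (hmeas : ∀ t, Measurable (zh t))
    (hindep : iIndepFun (m := fun _ : ℕ => m𝒴) zh μ)
    (hlaw : ∀ t ≥ 1, Measure.map (zh t) μ
        = ∑ i ∈ Finset.Icc 1 (jb t), ENNReal.ofReal (v t i) • Measure.dirac (z t i)) :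
    ∀ᵐ ω ∂μ, ∃ n0 : ℕ, ∀ n > n0, ∀ i : ℕ, 1 ≤ i → (i : ℝ) ≤ (n : ℝ) ^ ((1 : ℝ) / 4) →
      ∑ t ∈ Finset.Icc 1 n, dist (zh t ω) (y t)
        ≤ ∑ t ∈ Finset.Icc 1 n, dist (z t i) (y t)
          + 19 * (n : ℝ) ^ ((3 : ℝ) / 4) * Real.sqrt (Real.log n) + (n0 : ℝ) := by
  set ℓ : ℕ → ℕ → ℝ := fun t i => dist (z t i) (y t)
  have hdist : ∀ t, Measurable fun u : 𝒴 => dist u (y t) :=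
    fun t => (continuous_id.dist continuous_const).measurable
  have hconc : ∀ᵐ ω ∂μ, ∀ᶠ n in atTop, ∑ t ∈ Icc 1 n,
      (dist (zh t ω) (y t) - μ[fun ω => dist (zh t ω) (y t)]) < √(n * log n) :=
    ae_eventually_sum_sub_integral_lt (fun t => ((hdist t).comp (hmeas t)).aemeasurable)
      (hindep.comp _ hdist) fun t => ae_of_all _ fun ω => ⟨dist_nonneg, hbd _ _⟩
  have hmean : ∀ n, ∑ t ∈ Icc 1 n, μ[fun ω => dist (zh t ω) (y t)]
      = ∑ t ∈ Icc 1 n, Hedge.loss (η (jb t)) ℓ (jb t) (tseq (jb t)) t := fun n =>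
    sum_congr rfl fun t ht =>
      have ht : 1 ≤ t := (mem_Icc.1 ht).1
      Hedge.integral_comp_eq_loss (hmeas t) (hdist t) (hjb t ht).1 (fun i => rfl) <| by
        simpa only [hv t ht, Hedge.div_sum_eq_weight_div_potential (hjb t ht).1 ht (hw t ht)]
          using hlaw t ht
  filter_upwards [hconc] with ω hω
  obtain ⟨N, hN⟩ := eventually_atTop.1 hω
  refine ⟨max N 4, fun n hn i hi hin => ?_⟩
  have hreg := restarted_regret_add_sqrt_le ht1 htsucc hjb hη (ℓ := ℓ)
    (fun t i => ⟨dist_nonneg, hbd _ _⟩) (by omega : 4 ≤ n) hi hin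
  have hdev := hN n (by omega)
  rw [sum_sub_distrib] at hreg hdev
  linarith [hmean n, (Nat.cast_nonneg (max N 4) : (0 : ℝ) ≤ _)]
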